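/- Comparison theorem (converse direction): with P, Q stochastic matrices sharing stationary law π and κ > 0, if there exists φ : V → ℝ with E_P(φ,φ) < κ E_Q(φ,φ), then there exists f : Ω → ℝ with E_{ZRP(P,r,m)}(f,f) < κ E_{ZRP(Q,r,m)}(f,f). Hence inf over non-constant f of E_{ZRP(P,r,m)}(f,f)/E_{ZRP(Q,r,m)}(f,f) equals inf over non-constant φ of E_P(φ,φ)/E_Q(φ,φ). -/

import Mathlib

open Finset

variable (V : Type*) [Fintype V] [DecidableEq V]

/-- Product-form (unnormalized) stationary weight of a configuration. -/
noncomputable def weight (π : V → ℝ) (r : V → ℕ → ℝ) (η : V → ℕ) : ℝ :=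
  ∏ x, ∏ k ∈ Finset.Icc 1 (η x), π x / r x k

/-- Add one particle at site `x` : the configuration `η + δ_x`. -/
def addOne (η : V → ℕ) (x : V) : V → ℕ := Function.update η x (η x + 1)

/-- Move a particle from `x` to `y`: the configuration `η + δ_y - δ_x`. -/
def move (η : V → ℕ) (x y : V) : V → ℕ :=
  addOne V (Function.update η x (η x - 1)) y

/-- The set of configurations of `m` particles on `V`. -/
def configs (m : ℕ) : Finset (V → ℕ) :=
  (Fintype.piFinset fun _ : V => Finset.range (m + 1)).filter fun η => ∑ x, η x = m

/-- Single-particle Dirichlet form `⟨φ, (I - P) ψ⟩_π`. -/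
noncomputable def EP (π : V → ℝ) (P : V → V → ℝ) (φ ψ : V → ℝ) : ℝ :=
  ∑ x, ∑ y, π x * P x y * (φ x * (ψ x - ψ y))

/-- Zero-range Dirichlet form with jump matrix `P`, rates `r` and measure `μ`
on configurations with `m` particles. -/
noncomputable def EZRP (P : V → V → ℝ) (r : V → ℕ → ℝ) (μ : (V → ℕ) → ℝ) (m : ℕ)
    (f g : (V → ℕ) → ℝ) : ℝ :=
  ∑ η ∈ configs V m, ∑ x, ∑ y,
    μ η * r x (η x) * P x y * (f η * (g η - g (move V η x y)))

/-- Mean of an observable on `m`-particle configurations under `μ`. -/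
noncomputable def meanOn (m : ℕ) (μ : (V → ℕ) → ℝ) (f : (V → ℕ) → ℝ) : ℝ :=
  ∑ η ∈ configs V m, μ η * f η

/-- Variance of an observable on `m`-particle configurations under `μ`. -/
noncomputable def varOn (m : ℕ) (μ : (V → ℕ) → ℝ) (f : (V → ℕ) → ℝ) : ℝ :=
  meanOn V m μ (fun η => (f η) ^ 2) - (meanOn V m μ f) ^ 2

/-- Variance of `φ : V → ℝ` under the probability vector `π`. -/
noncomputable def varPi (π : V → ℝ) (φ : V → ℝ) : ℝ :=
  ∑ x, π x * (φ x) ^ 2 - (∑ x, π x * φ x) ^ 2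

/-!
The ZRP Dirichlet form disintegrates over a tagged particle: writing `η = ζ + δ_x` with `ζ` an
`(m - 1)`-particle configuration, the product form of `μ` gives `μ η * r x (η x) = π x * μ ζ`, so
`E_ZRP(f, f) = ∑_ζ μ ζ * E_P(f (ζ + δ_·), f (ζ + δ_·))`. For the linear lift
`f η = ∑_x φ x * η x`, each `f (ζ + δ_·)` is `φ` plus a constant, so both ZRP forms are the
single-particle forms times the same positive factor `∑_ζ μ ζ`: this gives the converse comparison
and realises every single-particle ratio as a ZRP ratio. Conversely the disintegration bounds every
ZRP ratio below by the infimum of the single-particle ratios; its denominator is positive for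
non-constant `f` because `Q` is irreducible and any two `m`-particle configurations are joined by
single-particle moves.
-/

theorem Matrix.eq_of_pow_apply_pos {n R α : Type*} [Fintype n] [DecidableEq n] [Ring R]
    [LinearOrder R] [IsOrderedRing R] [PosMulStrictMono R] [Nontrivial R] {A : Matrix n n R}
    (hA : ∀ i j, 0 ≤ A i j) {φ : n → α} (hφ : ∀ i j, 0 < A i j → φ i = φ j) {k : ℕ} {i j : n}
    (h : 0 < (A ^ k) i j) : φ i = φ j := by
  let := Matrix.toQuiver A
  obtain ⟨⟨p, -⟩⟩ := (Matrix.pow_apply_pos_iff_nonempty_path hA k i j).mp h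
  clear h
  induction p with
  | nil => rfl
  | cons _ e ih => exact ih.trans (hφ _ _ e.down)

lemma csInf_eq_of_subset_of_forall_le {α : Type*} [ConditionallyCompleteLattice α] {A B : Set α}
    (hAB : A ⊆ B) (hB : BddBelow B) (hne : B.Nonempty → A.Nonempty) (hle : ∀ b ∈ B, sInf A ≤ b) :
    sInf B = sInf A := by
  rcases B.eq_empty_or_nonempty with rfl | hBne
  · rw [Set.subset_empty_iff.mp hAB]
  · exact le_antisymm (csInf_le_csInf hB (hne hBne) hAB) (le_csInf hBne hle)

section DirichletForm

variable {ι : Type*} [Fintype ι] {π : ι → ℝ} {P : ι → ι → ℝ}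

lemma sum_mul_sub_eq_zero (hProw : ∀ x, ∑ y, P x y = 1) (hstat : ∀ y, ∑ x, π x * P x y = π y)
    (φ : ι → ℝ) : ∑ x, ∑ y, π x * P x y * (φ x - φ y) = 0 := by
  simp only [mul_sub, Finset.sum_sub_distrib]
  rw [sub_eq_zero, Finset.sum_comm (f := fun x y => π x * P x y * φ y)]
  simp_rw [← Finset.sum_mul, ← Finset.mul_sum, hProw, hstat, mul_one]

lemma EP_const_add (hProw : ∀ x, ∑ y, P x y = 1) (hstat : ∀ y, ∑ x, π x * P x y = π y)
    (c : ℝ) (φ : ι → ℝ) : EP ι π P (fun x => c + φ x) (fun x => c + φ x) = EP ι π P φ φ := by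
  calc EP ι π P (fun x => c + φ x) (fun x => c + φ x)
      = EP ι π P φ φ + c * ∑ x, ∑ y, π x * P x y * (φ x - φ y) := by
        simp only [EP, Finset.mul_sum, ← Finset.sum_add_distrib]
        exact Finset.sum_congr rfl fun x _ => Finset.sum_congr rfl fun y _ => by ring
    _ = EP ι π P φ φ := by rw [sum_mul_sub_eq_zero hProw hstat, mul_zero, add_zero]

lemma EP_self_eq_half_sum_sq (hProw : ∀ x, ∑ y, P x y = 1)
    (hstat : ∀ y, ∑ x, π x * P x y = π y) (φ : ι → ℝ) :
    EP ι π P φ φ = (∑ x, ∑ y, π x * P x y * (φ x - φ y) ^ 2) / 2 := by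
  calc EP ι π P φ φ
      = (∑ x, ∑ y, π x * P x y * (φ x - φ y) ^ 2
          + ∑ x, ∑ y, π x * P x y * (φ x ^ 2 - φ y ^ 2)) / 2 := by
        simp only [EP, ← Finset.sum_add_distrib, Finset.sum_div]
        exact Finset.sum_congr rfl fun x _ => Finset.sum_congr rfl fun y _ => by ring
    _ = _ := by rw [sum_mul_sub_eq_zero hProw hstat (φ · ^ 2), add_zero]

lemma EP_self_nonneg (hπ : ∀ x, 0 ≤ π x) (hP0 : ∀ x y, 0 ≤ P x y)
    (hProw : ∀ x, ∑ y, P x y = 1) (hstat : ∀ y, ∑ x, π x * P x y = π y) (φ : ι → ℝ) :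
    0 ≤ EP ι π P φ φ := by
  rw [EP_self_eq_half_sum_sq hProw hstat]
  exact div_nonneg (Finset.sum_nonneg fun x _ => Finset.sum_nonneg fun y _ =>
    mul_nonneg (mul_nonneg (hπ x) (hP0 x y)) (sq_nonneg _)) zero_le_two

lemma EP_self_eq_zero_of_forall_eq {φ : ι → ℝ} (hφ : ∀ x y, φ x = φ y) : EP ι π P φ φ = 0 :=
  Finset.sum_eq_zero fun x _ => Finset.sum_eq_zero fun y _ => by
    rw [hφ x y, sub_self, mul_zero, mul_zero]

lemma eq_of_EP_self_eq_zero (hπ : ∀ x, 0 < π x) (hP0 : ∀ x y, 0 ≤ P x y)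
    (hProw : ∀ x, ∑ y, P x y = 1) (hstat : ∀ y, ∑ x, π x * P x y = π y) {φ : ι → ℝ}
    (h : EP ι π P φ φ = 0) {x y : ι} (hxy : 0 < P x y) : φ x = φ y := by
  have hterm : ∀ x y, 0 ≤ π x * P x y * (φ x - φ y) ^ 2 := fun x y =>
    mul_nonneg (mul_nonneg (hπ x).le (hP0 x y)) (sq_nonneg _)
  rw [EP_self_eq_half_sum_sq hProw hstat, div_eq_zero_iff, or_iff_left two_ne_zero,
    Finset.sum_eq_zero_iff_of_nonneg fun x _ => Finset.sum_nonneg fun y _ => hterm x y] at h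
  have hxy' := (Finset.sum_eq_zero_iff_of_nonneg fun y _ => hterm x y).mp
    (h x (Finset.mem_univ x)) y (Finset.mem_univ y)
  rwa [mul_eq_zero, or_iff_right (mul_pos (hπ x) hxy).ne', sq_eq_zero_iff, sub_eq_zero] at hxy'

lemma EP_self_pos [DecidableEq ι] (hπ : ∀ x, 0 < π x) (hP0 : ∀ x y, 0 ≤ P x y)
    (hProw : ∀ x, ∑ y, P x y = 1) (hstat : ∀ y, ∑ x, π x * P x y = π y)
    (hirr : ∀ x y, ∃ k : ℕ, 0 < (Matrix.of P ^ k) x y) {φ : ι → ℝ} (hφ : ∃ x y, φ x ≠ φ y) :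
    0 < EP ι π P φ φ := by
  refine (EP_self_nonneg (fun x => (hπ x).le) hP0 hProw hstat φ).lt_of_ne' fun h => ?_
  obtain ⟨x, y, hne⟩ := hφ
  obtain ⟨k, hk⟩ := hirr x y
  exact hne (Matrix.eq_of_pow_apply_pos hP0
    (fun _ _ => eq_of_EP_self_eq_zero hπ hP0 hProw hstat h) hk)

lemma mul_EP_self_le {Q : ι → ι → ℝ} {s : ℝ}
    (hQ : ∀ φ : ι → ℝ, (∃ x y, φ x ≠ φ y) → 0 < EP ι π Q φ φ)
    (hs : ∀ φ : ι → ℝ, (∃ x y, φ x ≠ φ y) → s ≤ EP ι π P φ φ / EP ι π Q φ φ) (φ : ι → ℝ) :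
    s * EP ι π Q φ φ ≤ EP ι π P φ φ := by
  by_cases hφ : ∃ x y, φ x ≠ φ y
  · exact (le_div_iff₀ (hQ φ hφ)).mp (hs φ hφ)
  · push Not at hφ
    rw [EP_self_eq_zero_of_forall_eq hφ, EP_self_eq_zero_of_forall_eq hφ, mul_zero]

end DirichletForm

section Moves

variable {V}

omit [Fintype V]

def removeOne (η : V → ℕ) (x : V) : V → ℕ := Function.update η x (η x - 1)

lemma addOne_apply_self (ζ : V → ℕ) (x : V) : addOne V ζ x x = ζ x + 1 := by
  simp [addOne]

lemma addOne_removeOne {η : V → ℕ} {x : V} (hx : 1 ≤ η x) : addOne V (removeOne η x) x = η := by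
  ext z
  rcases eq_or_ne z x with rfl | hz
  · simp [addOne, removeOne]; omega
  · simp [addOne, removeOne, hz]

lemma removeOne_addOne (ζ : V → ℕ) (x : V) : removeOne (addOne V ζ x) x = ζ := by
  simp [addOne, removeOne]

lemma move_eq_addOne_removeOne (η : V → ℕ) (x y : V) :
    move V η x y = addOne V (removeOne η x) y := rfl

lemma move_addOne (ζ : V → ℕ) (x y : V) : move V (addOne V ζ x) x y = addOne V ζ y := by
  rw [move_eq_addOne_removeOne, removeOne_addOne]

end Moves

section Configurations

variable {V}

lemma mem_configs {m : ℕ} {η : V → ℕ} : η ∈ configs V m ↔ ∑ x, η x = m := by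
  simp only [configs, Finset.mem_filter, Fintype.mem_piFinset, Finset.mem_range,
    and_iff_right_iff_imp]
  rintro rfl x
  exact Nat.lt_succ_of_le (Finset.single_le_sum (fun z _ => Nat.zero_le _) (Finset.mem_univ x))

lemma single_mem_configs (x : V) (m : ℕ) : Pi.single x m ∈ configs V m := by
  simp [mem_configs]

lemma addOne_mem_configs {m : ℕ} {ζ : V → ℕ} (hζ : ζ ∈ configs V m) (x : V) :
    addOne V ζ x ∈ configs V (m + 1) := by
  rw [mem_configs] at hζ ⊢
  rw [addOne, Finset.sum_update_of_mem (Finset.mem_univ x), ← hζ,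
    Finset.sum_eq_sum_sdiff_singleton_add (Finset.mem_univ x) ζ]
  omega

lemma removeOne_mem_configs {m : ℕ} {η : V → ℕ} (hη : η ∈ configs V m) {x : V} (hx : 1 ≤ η x) :
    removeOne η x ∈ configs V (m - 1) := by
  rw [mem_configs] at hη ⊢
  rw [removeOne, Finset.sum_update_of_mem (Finset.mem_univ x), ← hη,
    Finset.sum_eq_sum_sdiff_singleton_add (Finset.mem_univ x) η]
  omega

lemma eq_of_forall_addOne_eq {α : Type*} {m : ℕ} {f : (V → ℕ) → α}
    (hf : ∀ ζ ∈ configs V (m - 1), ∀ x y, f (addOne V ζ x) = f (addOne V ζ y))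
    {η η' : V → ℕ} (hη : η ∈ configs V m) (hη' : η' ∈ configs V m) : f η = f η' := by
  rcases isEmpty_or_nonempty V with hV | ⟨⟨v⟩⟩
  · rw [Subsingleton.elim η η']
  suffices h : ∀ n, ∀ η ∈ configs V m, m - η v = n → f η = f (Pi.single v m) by
    rw [h _ η hη rfl, h _ η' hη' rfl]
  intro n
  induction n with
  | zero =>
    intro η hη hn
    have hsum := (Finset.add_sum_erase _ η (Finset.mem_univ v)).trans (mem_configs.mp hη)
    have hrest := Finset.sum_eq_zero_iff.mp (show ∑ z ∈ Finset.univ.erase v, η z = 0 by omega)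
    congr
    ext z
    rcases eq_or_ne z v with rfl | hz
    · simp only [Pi.single_eq_same]; omega
    · simp [hz, hrest z (Finset.mem_erase.mpr ⟨hz, Finset.mem_univ z⟩)]
  | succ n ih =>
    intro η hη hn
    have hsum := (Finset.add_sum_erase _ η (Finset.mem_univ v)).trans (mem_configs.mp hη)
    obtain ⟨x, hx, hx0⟩ := Finset.exists_ne_zero_of_sum_ne_zero
      (show ∑ z ∈ Finset.univ.erase v, η z ≠ 0 by omega)
    have hxv := Finset.ne_of_mem_erase hx
    have hx1 : 1 ≤ η x := Nat.one_le_iff_ne_zero.mpr hx0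
    have hmove : addOne V (removeOne η x) v ∈ configs V m := by
      simpa [Nat.sub_add_cancel (show 1 ≤ m by omega)] using
        addOne_mem_configs (removeOne_mem_configs hη hx1) v
    have hcount : m - addOne V (removeOne η x) v v = n := by
      simp only [addOne_apply_self, removeOne, Function.update_of_ne hxv.symm]; omega
    calc f η = f (addOne V (removeOne η x) x) := by rw [addOne_removeOne hx1]
      _ = f (addOne V (removeOne η x) v) := hf _ (removeOne_mem_configs hη hx1) x v
      _ = f (Pi.single v m) := ih _ hmove hcount

lemma exists_addOne_ne {α : Type*} {m : ℕ} {f : (V → ℕ) → α}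
    (hf : ∃ η ∈ configs V m, ∃ η' ∈ configs V m, f η ≠ f η') :
    ∃ ζ ∈ configs V (m - 1), ∃ x y, f (addOne V ζ x) ≠ f (addOne V ζ y) := by
  obtain ⟨η, hη, η', hη', hne⟩ := hf
  by_contra! h
  exact hne (eq_of_forall_addOne_eq h hη hη')

end Configurations

section ZeroRange

variable {V} {π : V → ℝ} {r : V → ℕ → ℝ}

omit [DecidableEq V] in
lemma weight_pos (hπ : ∀ x, 0 < π x) (hr : ∀ x k, 1 ≤ k → 0 < r x k) (η : V → ℕ) :
    0 < weight V π r η :=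
  Finset.prod_pos fun x _ => Finset.prod_pos fun k hk =>
    div_pos (hπ x) (hr x k (Finset.mem_Icc.mp hk).1)

lemma weight_addOne (π : V → ℝ) (r : V → ℕ → ℝ) (ζ : V → ℕ) (x : V) :
    weight V π r (addOne V ζ x) = π x / r x (ζ x + 1) * weight V π r ζ := by
  simp only [weight]
  rw [Fintype.prod_eq_mul_prod_compl x, Fintype.prod_eq_mul_prod_compl x, addOne_apply_self,
    Finset.prod_Icc_succ_top (by omega), mul_right_comm, mul_comm _ (π x / _)]
  congr 2
  exact Finset.prod_congr rfl fun z hz => by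
    rw [addOne, Function.update_of_ne (by simpa using hz)]

variable {μ : (V → ℕ) → ℝ} {Z : ℝ} {m : ℕ}

lemma sum_configs_mul_rate (hr : ∀ x k, 1 ≤ k → r x k ≠ 0) (hr0 : ∀ x, r x 0 = 0)
    (hμ : ∀ η, μ η = weight V π r η / Z) (hm : 1 ≤ m) (x : V) (F : (V → ℕ) → ℝ) :
    ∑ η ∈ configs V m, μ η * r x (η x) * F η
      = π x * ∑ ζ ∈ configs V (m - 1), μ ζ * F (addOne V ζ x) := by
  have hoccupied : ∀ η ∈ configs V m, μ η * r x (η x) * F η ≠ 0 → 1 ≤ η x := by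
    intro η _ h
    by_contra! h0
    rw [Nat.lt_one_iff.mp h0, hr0, mul_zero, zero_mul] at h
    exact h rfl
  rw [← Finset.sum_filter_of_ne hoccupied, Finset.mul_sum]
  symm
  refine Finset.sum_nbij' (addOne V · x) (removeOne · x) (fun ζ hζ => ?_) (fun η hη => ?_)
    (fun ζ _ => removeOne_addOne ζ x) (fun η hη => addOne_removeOne (Finset.mem_filter.mp hη).2)
    (fun ζ _ => ?_)
  · refine Finset.mem_filter.mpr ⟨?_, by simp [addOne_apply_self]⟩
    simpa [Nat.sub_add_cancel hm] using addOne_mem_configs hζ x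
  · obtain ⟨hη, hx⟩ := Finset.mem_filter.mp hη
    exact removeOne_mem_configs hη hx
  · have := hr x (ζ x + 1) (Nat.le_add_left 1 _)
    rw [hμ, hμ, weight_addOne, addOne_apply_self]
    field_simp

theorem EZRP_eq_sum_mul_EP (P : V → V → ℝ) (hr : ∀ x k, 1 ≤ k → r x k ≠ 0)
    (hr0 : ∀ x, r x 0 = 0) (hμ : ∀ η, μ η = weight V π r η / Z) (hm : 1 ≤ m)
    (f g : (V → ℕ) → ℝ) :
    EZRP V P r μ m f g = ∑ ζ ∈ configs V (m - 1),
      μ ζ * EP V π P (fun x => f (addOne V ζ x)) (fun x => g (addOne V ζ x)) := by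
  calc EZRP V P r μ m f g
      = ∑ x, ∑ η ∈ configs V m,
          μ η * r x (η x) * ∑ y, P x y * (f η * (g η - g (move V η x y))) := by
        rw [EZRP, Finset.sum_comm]
        simp_rw [Finset.mul_sum, mul_assoc]
    _ = ∑ x, π x * ∑ ζ ∈ configs V (m - 1), μ ζ *
          ∑ y, P x y * (f (addOne V ζ x) * (g (addOne V ζ x) - g (addOne V ζ y))) := by
        simp_rw [sum_configs_mul_rate hr hr0 hμ hm, move_addOne]
    _ = _ := by
        simp_rw [EP, Finset.mul_sum]
        rw [Finset.sum_comm]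
        exact Finset.sum_congr rfl fun ζ _ => Finset.sum_congr rfl fun x _ =>
          Finset.sum_congr rfl fun y _ => by ring

def linearLift (φ : V → ℝ) (η : V → ℕ) : ℝ := ∑ x, φ x * η x

lemma linearLift_single (φ : V → ℝ) (x : V) (n : ℕ) :
    linearLift φ (Pi.single x n) = φ x * n := by
  simp [linearLift, Pi.single_apply]

lemma linearLift_addOne (φ : V → ℝ) (ζ : V → ℕ) (x : V) :
    linearLift φ (addOne V ζ x) = linearLift φ ζ + φ x := by
  simp only [linearLift]
  rw [Fintype.sum_eq_add_sum_compl x, Fintype.sum_eq_add_sum_compl x (fun z => φ z * ζ z),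
    addOne_apply_self, Finset.sum_congr rfl fun z hz => by
      rw [addOne, Function.update_of_ne (by simpa using hz)]]
  push_cast
  ring

lemma EZRP_linearLift {P : V → V → ℝ} (hProw : ∀ x, ∑ y, P x y = 1)
    (hstat : ∀ y, ∑ x, π x * P x y = π y) (hr : ∀ x k, 1 ≤ k → r x k ≠ 0)
    (hr0 : ∀ x, r x 0 = 0) (hμ : ∀ η, μ η = weight V π r η / Z) (hm : 1 ≤ m) (φ : V → ℝ) :
    EZRP V P r μ m (linearLift φ) (linearLift φ)
      = (∑ ζ ∈ configs V (m - 1), μ ζ) * EP V π P φ φ := by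
  rw [EZRP_eq_sum_mul_EP P hr hr0 hμ hm, Finset.sum_mul]
  refine Finset.sum_congr rfl fun ζ _ => ?_
  simp_rw [linearLift_addOne, EP_const_add hProw hstat]

lemma sum_configs_pos [Nonempty V] (hμpos : ∀ η, 0 < μ η) (n : ℕ) :
    0 < ∑ ζ ∈ configs V n, μ ζ :=
  Finset.sum_pos (fun ζ _ => hμpos ζ) ⟨_, single_mem_configs (Classical.arbitrary V) n⟩

lemma EZRP_linearLift_lt {P Q : V → V → ℝ} {κ : ℝ} (hProw : ∀ x, ∑ y, P x y = 1)
    (hstatP : ∀ y, ∑ x, π x * P x y = π y) (hQrow : ∀ x, ∑ y, Q x y = 1)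
    (hstatQ : ∀ y, ∑ x, π x * Q x y = π y) (hr : ∀ x k, 1 ≤ k → r x k ≠ 0)
    (hr0 : ∀ x, r x 0 = 0) (hμ : ∀ η, μ η = weight V π r η / Z) (hm : 1 ≤ m)
    (hμpos : ∀ η, 0 < μ η) {φ : V → ℝ} (hφ : EP V π P φ φ < κ * EP V π Q φ φ) :
    EZRP V P r μ m (linearLift φ) (linearLift φ)
      < κ * EZRP V Q r μ m (linearLift φ) (linearLift φ) := by
  have : Nonempty V := by
    by_contra! hV
    simp [EP] at hφ
  rw [EZRP_linearLift hProw hstatP hr hr0 hμ hm, EZRP_linearLift hQrow hstatQ hr hr0 hμ hm,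
    mul_left_comm]
  exact mul_lt_mul_of_pos_left hφ (sum_configs_pos hμpos _)

lemma EZRP_self_nonneg {P : V → V → ℝ} (hr : ∀ x k, 1 ≤ k → r x k ≠ 0)
    (hr0 : ∀ x, r x 0 = 0) (hμ : ∀ η, μ η = weight V π r η / Z) (hm : 1 ≤ m)
    (hμ0 : ∀ η, 0 ≤ μ η) (hP : ∀ φ, 0 ≤ EP V π P φ φ) (f : (V → ℕ) → ℝ) :
    0 ≤ EZRP V P r μ m f f := by
  rw [EZRP_eq_sum_mul_EP P hr hr0 hμ hm]
  exact Finset.sum_nonneg fun ζ _ => mul_nonneg (hμ0 ζ) (hP _)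

lemma EZRP_self_pos {P : V → V → ℝ} (hr : ∀ x k, 1 ≤ k → r x k ≠ 0)
    (hr0 : ∀ x, r x 0 = 0) (hμ : ∀ η, μ η = weight V π r η / Z) (hm : 1 ≤ m)
    (hμpos : ∀ η, 0 < μ η) (hP0 : ∀ φ, 0 ≤ EP V π P φ φ)
    (hP : ∀ φ : V → ℝ, (∃ x y, φ x ≠ φ y) → 0 < EP V π P φ φ) {f : (V → ℕ) → ℝ}
    (hf : ∃ η ∈ configs V m, ∃ η' ∈ configs V m, f η ≠ f η') : 0 < EZRP V P r μ m f f := by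
  rw [EZRP_eq_sum_mul_EP P hr hr0 hμ hm]
  obtain ⟨ζ, hζ, hne⟩ := exists_addOne_ne hf
  exact Finset.sum_pos' (fun ζ _ => mul_nonneg (hμpos ζ).le (hP0 _))
    ⟨ζ, hζ, mul_pos (hμpos ζ) (hP _ hne)⟩

lemma mul_EZRP_self_le {P Q : V → V → ℝ} {s : ℝ} (hr : ∀ x k, 1 ≤ k → r x k ≠ 0)
    (hr0 : ∀ x, r x 0 = 0) (hμ : ∀ η, μ η = weight V π r η / Z) (hm : 1 ≤ m)
    (hμ0 : ∀ η, 0 ≤ μ η) (h : ∀ φ, s * EP V π Q φ φ ≤ EP V π P φ φ) (f : (V → ℕ) → ℝ) :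
    s * EZRP V Q r μ m f f ≤ EZRP V P r μ m f f := by
  rw [EZRP_eq_sum_mul_EP Q hr hr0 hμ hm, EZRP_eq_sum_mul_EP P hr hr0 hμ hm, Finset.mul_sum]
  exact Finset.sum_le_sum fun ζ _ => by
    rw [mul_left_comm]
    exact mul_le_mul_of_nonneg_left (h _) (hμ0 ζ)

end ZeroRange

theorem zrp_comparison_converse
    (m : ℕ) (hm : 1 ≤ m)
    (π : V → ℝ) (hπ : ∀ x, 0 < π x)
    (P Q : V → V → ℝ)
    (hP0 : ∀ x y, 0 ≤ P x y) (hProw : ∀ x, ∑ y, P x y = 1)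
    (hQ0 : ∀ x y, 0 ≤ Q x y) (hQrow : ∀ x, ∑ y, Q x y = 1)
    (hQirr : ∀ x y : V, ∃ k : ℕ, 0 < (Matrix.of Q ^ k) x y)
    (hstatP : ∀ y, ∑ x, π x * P x y = π y)
    (hstatQ : ∀ y, ∑ x, π x * Q x y = π y)
    (r : V → ℕ → ℝ) (hr : ∀ x k, 1 ≤ k → 0 < r x k) (hr0 : ∀ x, r x 0 = 0)
    (Z : ℝ) (hZ : 0 < Z)
    (μ : (V → ℕ) → ℝ) (hμ : ∀ η, μ η = weight V π r η / Z)
    (κ : ℝ) :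
    ((∃ φ : V → ℝ, EP V π P φ φ < κ * EP V π Q φ φ) →
      ∃ f : (V → ℕ) → ℝ, EZRP V P r μ m f f < κ * EZRP V Q r μ m f f)
    ∧ sInf {t : ℝ | ∃ f : (V → ℕ) → ℝ,
          (∃ η ∈ configs V m, ∃ η' ∈ configs V m, f η ≠ f η') ∧
          t = EZRP V P r μ m f f / EZRP V Q r μ m f f}
      = sInf {t : ℝ | ∃ φ : V → ℝ, (∃ x y : V, φ x ≠ φ y) ∧
          t = EP V π P φ φ / EP V π Q φ φ} := by
  have hr' : ∀ x k, 1 ≤ k → r x k ≠ 0 := fun x k hk => (hr x k hk).ne'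
  have hμpos : ∀ η, 0 < μ η := fun η => by rw [hμ]; exact div_pos (weight_pos hπ hr η) hZ
  have hPnonneg := EP_self_nonneg (fun x => (hπ x).le) hP0 hProw hstatP
  have hQnonneg := EP_self_nonneg (fun x => (hπ x).le) hQ0 hQrow hstatQ
  have hQpos : ∀ φ : V → ℝ, (∃ x y, φ x ≠ φ y) → 0 < EP V π Q φ φ :=
    fun _ => EP_self_pos hπ hQ0 hQrow hstatQ hQirr
  refine ⟨fun ⟨φ, hφ⟩ => ⟨linearLift φ,
    EZRP_linearLift_lt hProw hstatP hQrow hstatQ hr' hr0 hμ hm hμpos hφ⟩, ?_⟩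
  refine csInf_eq_of_subset_of_forall_le ?_ ⟨0, ?_⟩ ?_ ?_
  · rintro _ ⟨φ, ⟨x, y, hxy⟩, rfl⟩
    refine ⟨linearLift φ, ⟨_, single_mem_configs x m, _, single_mem_configs y m, ?_⟩, ?_⟩
    · rw [linearLift_single, linearLift_single]
      exact fun h => hxy (mul_right_cancel₀ (by positivity) h)
    · have : Nonempty V := ⟨x⟩
      rw [EZRP_linearLift hProw hstatP hr' hr0 hμ hm, EZRP_linearLift hQrow hstatQ hr' hr0 hμ hm,
        mul_div_mul_left _ _ (sum_configs_pos hμpos _).ne']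
  · rintro _ ⟨f, -, rfl⟩
    exact div_nonneg (EZRP_self_nonneg hr' hr0 hμ hm (fun η => (hμpos η).le) hPnonneg f)
      (EZRP_self_nonneg hr' hr0 hμ hm (fun η => (hμpos η).le) hQnonneg f)
  · rintro ⟨_, f, hf, rfl⟩
    obtain ⟨ζ, -, x, y, hne⟩ := exists_addOne_ne hf
    exact ⟨_, fun z => f (addOne V ζ z), ⟨x, y, hne⟩, rfl⟩
  · rintro _ ⟨f, hf, rfl⟩
    rw [le_div_iff₀ (EZRP_self_pos hr' hr0 hμ hm hμpos hQnonneg hQpos hf)]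
    apply mul_EZRP_self_le hr' hr0 hμ hm (fun η => (hμpos η).le)
    refine mul_EP_self_le hQpos fun φ hφ => csInf_le ⟨0, ?_⟩ ⟨φ, hφ, rfl⟩
    rintro _ ⟨ψ, -, rfl⟩
    exact div_nonneg (hPnonneg ψ) (hQnonneg ψ)
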